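/- Fix an open set U ⊆ ℝ^n and q ∈ ℕ, and let x ∈ U. The two-sided ideal m_x = {h ∈ A_x : ε(h(x)) = 0} of the algebra A_x of germs at x of smooth λ_q-valued maps is generated, as a two-sided ideal, by the germs at x of the scalar coordinate functions y ↦ (y_i − x_i)·1 (i = 1, …, n) together with the constant germs with value ι(e_j) (j = 1, …, q), where ι : ℝ^q → λ_q is the canonical embedding and e_1, …, e_q is the standard basis of ℝ^q. -/

import Mathlib

/-!
Every smooth germ is a finite sum `∑ sⱼ · bⱼ` of smooth real germs `sⱼ` (extended from a
neighbourhood of `x` to all of `ℝⁿ` by a bump function) times constants `bⱼ ∈ λ_q`. Splitting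
`bⱼ = ε(bⱼ) + (bⱼ - ε(bⱼ))`, the nilpotent parts lie in the ideal generated by the `ι(eⱼ)`, by
induction on the exterior algebra. If `h ∈ m_x`, the scalar part `c = ∑ ε(bⱼ) sⱼ` vanishes at `x`,
so Hadamard's lemma writes it as `∑ (yᵢ - xᵢ) dᵢ` with `dᵢ y = ∫₀¹ ∂ᵢc (x + t (y - x)) dt`,
smooth by differentiation under the integral sign. Conversely, `ε` composed with evaluation at `x`
is an algebra map killing every generator.
-/

set_option synthInstance.maxHeartbeats 1000000
set_option maxHeartbeats 1000000

open Filter Topology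

/-- The Grassmann algebra `λ_q = R[θ_1, …, θ_q]` over `ℝ`. -/
abbrev GrassmannAlg (q : ℕ) : Type := ExteriorAlgebra ℝ (Fin q → ℝ)

/-- `f : ℝ^n → λ_q` is `C^∞` on `U`.  Since `λ_q` is a finite-dimensional real vector space
(of dimension `2 ^ q`), smoothness with respect to any norm on `λ_q` (all of which are
equivalent) amounts to the existence of a finite decomposition `f = ∑ j, g j • b j` with
`C^∞` real-valued coefficient functions `g j` and constant vectors `b j ∈ λ_q`;
we take this as the definition. -/
def ContDiffOnG {n q : ℕ} (f : (Fin n → ℝ) → GrassmannAlg q) (U : Set (Fin n → ℝ)) : Prop :=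
  ∃ (k : ℕ) (g : Fin k → (Fin n → ℝ) → ℝ) (b : Fin k → GrassmannAlg q),
    (∀ j, ContDiffOn ℝ (⊤ : ℕ∞) (g j) U) ∧ ∀ y ∈ U, f y = ∑ j, g j y • b j

theorem ContDiffOnG.mul {n q : ℕ} {f g : (Fin n → ℝ) → GrassmannAlg q}
    {U V : Set (Fin n → ℝ)} (hf : ContDiffOnG f U) (hg : ContDiffOnG g V) :
    ContDiffOnG (f * g) (U ∩ V) := by
  obtain ⟨k₁, g₁, b₁, hg₁, hfd⟩ := hf
  obtain ⟨k₂, g₂, b₂, hg₂, hgd⟩ := hg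
  refine ⟨k₁ * k₂,
    fun p y => g₁ (finProdFinEquiv.symm p).1 y * g₂ (finProdFinEquiv.symm p).2 y,
    fun p => b₁ (finProdFinEquiv.symm p).1 * b₂ (finProdFinEquiv.symm p).2, ?_, ?_⟩
  · intro p
    exact ((hg₁ _).mono Set.inter_subset_left).mul ((hg₂ _).mono Set.inter_subset_right)
  · intro y hy
    have key : ∀ pr : Fin k₁ × Fin k₂,
        (g₁ pr.1 y • b₁ pr.1) * (g₂ pr.2 y • b₂ pr.2)
          = (g₁ pr.1 y * g₂ pr.2 y) • (b₁ pr.1 * b₂ pr.2) := by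
      intro pr
      rw [smul_mul_assoc, mul_smul_comm, smul_smul]
    calc (f * g) y = f y * g y := rfl
      _ = (∑ j, g₁ j y • b₁ j) * (∑ j, g₂ j y • b₂ j) := by rw [hfd y hy.1, hgd y hy.2]
      _ = ∑ j : Fin k₁, ∑ j' : Fin k₂, (g₁ j y • b₁ j) * (g₂ j' y • b₂ j') :=
        Finset.sum_mul_sum _ _ _ _
      _ = ∑ pr : Fin k₁ × Fin k₂, (g₁ pr.1 y • b₁ pr.1) * (g₂ pr.2 y • b₂ pr.2) :=
        (Fintype.sum_prod_type
          (fun pr : Fin k₁ × Fin k₂ => (g₁ pr.1 y • b₁ pr.1) * (g₂ pr.2 y • b₂ pr.2))).symm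
      _ = ∑ pr : Fin k₁ × Fin k₂, (g₁ pr.1 y * g₂ pr.2 y) • (b₁ pr.1 * b₂ pr.2) :=
        Finset.sum_congr rfl fun pr _ => key pr
      _ = ∑ p : Fin (k₁ * k₂), (g₁ (finProdFinEquiv.symm p).1 y * g₂ (finProdFinEquiv.symm p).2 y)
            • (b₁ (finProdFinEquiv.symm p).1 * b₂ (finProdFinEquiv.symm p).2) :=
        (Equiv.sum_comp finProdFinEquiv.symm fun pr =>
          (g₁ pr.1 y * g₂ pr.2 y) • (b₁ pr.1 * b₂ pr.2)).symm

theorem ContDiffOnG.add {n q : ℕ} {f g : (Fin n → ℝ) → GrassmannAlg q}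
    {U V : Set (Fin n → ℝ)} (hf : ContDiffOnG f U) (hg : ContDiffOnG g V) :
    ContDiffOnG (f + g) (U ∩ V) := by
  obtain ⟨k₁, g₁, b₁, hg₁, hfd⟩ := hf
  obtain ⟨k₂, g₂, b₂, hg₂, hgd⟩ := hg
  refine ⟨k₁ + k₂, Fin.append g₁ g₂, Fin.append b₁ b₂, ?_, ?_⟩
  · intro j
    refine Fin.addCases (fun i => ?_) (fun i => ?_) j
    · rw [Fin.append_left]
      exact (hg₁ i).mono Set.inter_subset_left
    · rw [Fin.append_right]
      exact (hg₂ i).mono Set.inter_subset_right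
  · intro y hy
    rw [Pi.add_apply, hfd y hy.1, hgd y hy.2, Fin.sum_univ_add]
    congr 1
    · exact Finset.sum_congr rfl fun i _ => by rw [Fin.append_left, Fin.append_left]
    · exact Finset.sum_congr rfl fun i _ => by rw [Fin.append_right, Fin.append_right]

theorem ContDiffOnG.const {n q : ℕ} (c : GrassmannAlg q) :
    ContDiffOnG (fun _ : Fin n → ℝ => c) Set.univ := by
  refine ⟨1, fun _ _ => 1, fun _ => c, fun _ => contDiffOn_const, fun y _ => ?_⟩
  simp

/-- The canonical `ℝ`-algebra structure on the ring of germs of `A`-valued functions,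
where `A` is an `ℝ`-algebra. -/
noncomputable instance Filter.Germ.instAlgebraReal {α : Type*} (l : Filter α) (A : Type*)
    [Semiring A] [Algebra ℝ A] : Algebra ℝ (Filter.Germ l A) :=
  Algebra.ofModule
    (fun r x y => x.inductionOn fun f => y.inductionOn fun g => by
      rw [← Filter.Germ.coe_smul, ← Filter.Germ.coe_mul, ← Filter.Germ.coe_mul,
        ← Filter.Germ.coe_smul]
      exact congrArg _ (funext fun z => smul_mul_assoc r (f z) (g z)))
    (fun r x y => x.inductionOn fun f => y.inductionOn fun g => by
      rw [← Filter.Germ.coe_smul, ← Filter.Germ.coe_mul, ← Filter.Germ.coe_mul,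
        ← Filter.Germ.coe_smul]
      exact congrArg _ (funext fun z => mul_smul_comm r (f z) (g z)))

/-- `A_x`: the `ℝ`-algebra of germs at `x ∈ ℝ^n` of `C^∞` maps from open neighbourhoods of
`x` to the Grassmann algebra `λ_q`; this is the stalk at `x` of the structure sheaf
`C^∞ ⊗ ⋀ (ℝ^q)*` of a Berezin–Kostant–Leites superdomain. -/
noncomputable def SmoothGermAtG (n q : ℕ) (x : Fin n → ℝ) :
    Subalgebra ℝ (Filter.Germ (𝓝 x) (GrassmannAlg q)) where
  carrier := {φ | ∃ f : (Fin n → ℝ) → GrassmannAlg q,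
    (∃ U : Set (Fin n → ℝ), IsOpen U ∧ x ∈ U ∧ ContDiffOnG f U) ∧ φ = ↑f}
  mul_mem' := by
    rintro φ ψ ⟨f, ⟨U, hU, hxU, hf⟩, rfl⟩ ⟨g, ⟨V, hV, hxV, hg⟩, rfl⟩
    exact ⟨f * g, ⟨U ∩ V, hU.inter hV, ⟨hxU, hxV⟩, hf.mul hg⟩,
      (Filter.Germ.coe_mul f g).symm ▸ rfl⟩
  add_mem' := by
    rintro φ ψ ⟨f, ⟨U, hU, hxU, hf⟩, rfl⟩ ⟨g, ⟨V, hV, hxV, hg⟩, rfl⟩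
    exact ⟨f + g, ⟨U ∩ V, hU.inter hV, ⟨hxU, hxV⟩, hf.add hg⟩,
      (Filter.Germ.coe_add f g).symm ▸ rfl⟩
  algebraMap_mem' := by
    intro c
    refine ⟨fun _ => algebraMap ℝ (GrassmannAlg q) c,
      ⟨Set.univ, isOpen_univ, trivial, ContDiffOnG.const _⟩, ?_⟩
    show c • (1 : Filter.Germ (𝓝 x) (GrassmannAlg q)) = _
    rw [show (1 : Filter.Germ (𝓝 x) (GrassmannAlg q))
        = ((fun _ => (1 : GrassmannAlg q)) : (Fin n → ℝ) → GrassmannAlg q) from rfl,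
      ← Filter.Germ.coe_smul]
    exact congrArg _ (funext fun z => (Algebra.algebraMap_eq_smul_one c).symm)

/-- The two-sided ideal `m_x = {h ∈ A_x ∣ ε (h x) = 0}` of the algebra `A_x` of germs at `x`
of smooth `λ_q`-valued maps, as an `ℝ`-submodule of `A_x` (its powers, formed via the
product of submodules of the algebra `A_x`, coincide with the powers of the two-sided
ideal `m_x`). -/
noncomputable def mGSub (n q : ℕ) (x : Fin n → ℝ) : Submodule ℝ (SmoothGermAtG n q x) where
  carrier := {h | ExteriorAlgebra.algebraMapInv
    (Filter.Germ.value (h : Filter.Germ (𝓝 x) (GrassmannAlg q))) = 0}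
  zero_mem' := by
    show ExteriorAlgebra.algebraMapInv
      (Filter.Germ.value (0 : Filter.Germ (𝓝 x) (GrassmannAlg q))) = 0
    have h0 : Filter.Germ.value (0 : Filter.Germ (𝓝 x) (GrassmannAlg q)) = 0 := rfl
    rw [h0, map_zero]
  add_mem' := by
    intro a b ha hb
    show ExteriorAlgebra.algebraMapInv
      (Filter.Germ.value ((a : Filter.Germ (𝓝 x) (GrassmannAlg q))
        + (b : Filter.Germ (𝓝 x) (GrassmannAlg q)))) = 0
    have : Filter.Germ.value ((a : Filter.Germ (𝓝 x) (GrassmannAlg q))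
        + (b : Filter.Germ (𝓝 x) (GrassmannAlg q)))
        = Filter.Germ.value (a : Filter.Germ (𝓝 x) (GrassmannAlg q))
          + Filter.Germ.value (b : Filter.Germ (𝓝 x) (GrassmannAlg q)) :=
      map_add Filter.Germ.valueAddHom _ _
    rw [this, map_add, ha, hb, add_zero]
  smul_mem' := by
    intro r h hh
    show ExteriorAlgebra.algebraMapInv
      (Filter.Germ.value (r • (h : Filter.Germ (𝓝 x) (GrassmannAlg q)))) = 0
    have : Filter.Germ.value (r • (h : Filter.Germ (𝓝 x) (GrassmannAlg q)))
        = r • Filter.Germ.value (h : Filter.Germ (𝓝 x) (GrassmannAlg q)) :=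
      map_smul (Filter.Germ.valueₗ (𝕜 := ℝ)) r _
    rw [this, map_smul, hh, smul_zero]

/-- The germ at `x` of the scalar coordinate function `y ↦ (y i - x i) · 1`, as an element
of `A_x`. -/
noncomputable def evenCoordGermG (n q : ℕ) (x : Fin n → ℝ) (i : Fin n) :
    SmoothGermAtG n q x :=
  ⟨(↑(fun y : Fin n → ℝ => algebraMap ℝ (GrassmannAlg q) (y i - x i)) :
      Filter.Germ (𝓝 x) (GrassmannAlg q)),
    ⟨fun y => algebraMap ℝ (GrassmannAlg q) (y i - x i),
      ⟨Set.univ, isOpen_univ, trivial,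
        ⟨1, fun _ y => y i - x i, fun _ => 1,
          fun _ => ((ContinuousLinearMap.proj (R := ℝ) (φ := fun _ : Fin n => ℝ) i).contDiff.sub
            contDiff_const).contDiffOn,
          fun y _ => by simp [Algebra.algebraMap_eq_smul_one]⟩⟩, rfl⟩⟩

/-- The constant germ at `x` with value the odd generator `θ_j = ι (e j)`, as an element
of `A_x`. -/
noncomputable def oddCoordGermG (n q : ℕ) (x : Fin n → ℝ) (j : Fin q) :
    SmoothGermAtG n q x :=
  ⟨(↑(fun _ : Fin n → ℝ => ExteriorAlgebra.ι ℝ (Pi.single j (1 : ℝ) : Fin q → ℝ)) :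
      Filter.Germ (𝓝 x) (GrassmannAlg q)),
    ⟨fun _ => ExteriorAlgebra.ι ℝ (Pi.single j (1 : ℝ) : Fin q → ℝ),
      ⟨Set.univ, isOpen_univ, trivial, ContDiffOnG.const _⟩, rfl⟩⟩

universe u

section ParametricIntegral

-- `H` and `E` share a universe so that the induction below can replace `E` by `H →L[ℝ] E`.
variable {H E : Type u} [NormedAddCommGroup H] [NormedSpace ℝ H] [ProperSpace H]
  [NormedAddCommGroup E] [NormedSpace ℝ E] {a b : ℝ}

theorem hasFDerivAt_intervalIntegral_of_contDiff {F : ℝ × H → E} (hF : ContDiff ℝ 1 F)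
    (y₀ : H) :
    HasFDerivAt (fun y => ∫ t in a..b, F (t, y))
      (∫ t in a..b, (fderiv ℝ F (t, y₀)).comp (ContinuousLinearMap.inr ℝ ℝ H)) y₀ := by
  have hF' : Continuous fun p => (fderiv ℝ F p).comp (ContinuousLinearMap.inr ℝ ℝ H) :=
    ((ContinuousLinearMap.compL ℝ H (ℝ × H) E).flip
      (ContinuousLinearMap.inr ℝ ℝ H)).continuous.comp (hF.continuous_fderiv one_ne_zero)
  obtain ⟨C, hC⟩ := (isCompact_uIcc.prod (isCompact_closedBall y₀ 1)).exists_bound_of_continuousOn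
    hF'.continuousOn
  have hslice : ∀ y : H, Continuous fun t : ℝ => F (t, y) := fun y => by
    have := hF.continuous; fun_prop
  refine intervalIntegral.hasFDerivAt_integral_of_dominated_of_fderiv_le (bound := fun _ => C)
    (F' := fun y t => (fderiv ℝ F (t, y)).comp (ContinuousLinearMap.inr ℝ ℝ H))
    (Metric.ball_mem_nhds y₀ one_pos)
    (Eventually.of_forall fun y => (hslice y).aestronglyMeasurable)
    ((hslice y₀).intervalIntegrable _ _)
    (hF'.comp (continuous_id.prodMk continuous_const)).aestronglyMeasurable ?_
    intervalIntegrable_const (Eventually.of_forall fun t _ y _ => ?_)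
  · exact Eventually.of_forall fun t ht y hy =>
      hC (t, y) ⟨Set.uIoc_subset_uIcc ht, Metric.ball_subset_closedBall hy⟩
  · exact (hF.differentiable one_ne_zero (t, y)).hasFDerivAt.comp y
      (hasFDerivAt_prodMk_right t y)

theorem contDiff_intervalIntegral_of_contDiff (m : ℕ) {F : ℝ × H → E} (hF : ContDiff ℝ m F) :
    ContDiff ℝ m fun y => ∫ t in a..b, F (t, y) := by
  induction m generalizing E with
  | zero =>
    rw [Nat.cast_zero, contDiff_zero] at hF ⊢
    exact intervalIntegral.continuous_parametric_intervalIntegral_of_continuous'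
      (f := fun y t => F (t, y)) (hF.comp continuous_swap) a b
  | succ m ih =>
    have hF' : ContDiff ℝ m fun p => (fderiv ℝ F p).comp (ContinuousLinearMap.inr ℝ ℝ H) :=
      ((ContinuousLinearMap.compL ℝ H (ℝ × H) E).flip
        (ContinuousLinearMap.inr ℝ ℝ H)).contDiff.comp (hF.fderiv_right (by push_cast; rfl))
    have hF1 : ContDiff ℝ 1 F := hF.of_le (by exact_mod_cast Nat.le_add_left 1 m)
    have hderiv := fun y => hasFDerivAt_intervalIntegral_of_contDiff (a := a) (b := b) hF1 y
    refine contDiff_succ_iff_fderiv.2 ⟨fun y => (hderiv y).differentiableAt,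
      fun h => absurd h (WithTop.natCast_ne_top m), ?_⟩
    rw [funext fun y => (hderiv y).fderiv]
    exact ih hF'

end ParametricIntegral

theorem ContDiff.exists_eq_add_sum_sub_mul {n : ℕ} {c : (Fin n → ℝ) → ℝ}
    (hc : ContDiff ℝ (⊤ : ℕ∞) c) (x : Fin n → ℝ) :
    ∃ d : Fin n → (Fin n → ℝ) → ℝ, (∀ i, ContDiff ℝ (⊤ : ℕ∞) (d i)) ∧
      ∀ y, c y = c x + ∑ i, (y i - x i) * d i y := by
  have hDc : ContDiff ℝ (⊤ : ℕ∞) (fderiv ℝ c) := hc.fderiv_right (by exact_mod_cast le_top)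
  set D : (Fin n → ℝ) → (Fin n → ℝ) →L[ℝ] ℝ :=
    fun y => ∫ t in (0 : ℝ)..1, fderiv ℝ c (x + t • (y - x))
  have hD : ContDiff ℝ (⊤ : ℕ∞) D := by
    have hF : ContDiff ℝ (⊤ : ℕ∞) fun p : ℝ × (Fin n → ℝ) => fderiv ℝ c (x + p.1 • (p.2 - x)) :=
      hDc.comp (by fun_prop)
    exact contDiff_infty.2 fun m =>
      contDiff_intervalIntegral_of_contDiff m (hF.of_le (by exact_mod_cast le_top))
  refine ⟨fun i y => D y (Pi.single i 1),
    fun i => (ContinuousLinearMap.apply ℝ ℝ (Pi.single i 1 : Fin n → ℝ)).contDiff.comp hD,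
    fun y => ?_⟩
  have hftc : c y = c x + ∫ t in (0 : ℝ)..1, fderiv ℝ c (x + t • (y - x)) (y - x) := by
    simpa using map_add_eq_sum_add_integral_iteratedFDeriv (n := 0) (x := x) (y := y - x)
      fun t _ => hc.contDiffAt.of_le (by exact_mod_cast le_top)
  have hint : IntervalIntegrable (fun t : ℝ => fderiv ℝ c (x + t • (y - x)))
      MeasureTheory.volume 0 1 :=
    (hDc.continuous.comp (by fun_prop)).intervalIntegrable 0 1
  rw [hftc, ← ContinuousLinearMap.intervalIntegral_apply hint]
  have hexpand : ∀ (L : (Fin n → ℝ) →L[ℝ] ℝ) (v : Fin n → ℝ),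
      L v = ∑ i, v i * L (Pi.single i 1) := fun L v => by
    conv_lhs => rw [← Finset.univ_sum_single v, map_sum]
    refine Finset.sum_congr rfl fun i _ => ?_
    rw [← smul_eq_mul, ← map_smul, ← Pi.single_smul, smul_eq_mul, mul_one]
  exact congrArg _ (hexpand (D y) (y - x))

theorem ContDiffOn.exists_contDiff_eventuallyEq {E F : Type*} [NormedAddCommGroup E]
    [NormedSpace ℝ E] [HasContDiffBump E] [NormedAddCommGroup F] [NormedSpace ℝ F]
    {n : ℕ∞} {f : E → F} {U : Set E} (hU : IsOpen U) {x : E} (hx : x ∈ U)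
    (hf : ContDiffOn ℝ n f U) : ∃ g : E → F, ContDiff ℝ n g ∧ g =ᶠ[𝓝 x] f := by
  obtain ⟨ε, hε, hball⟩ := Metric.isOpen_iff.1 hU x hx
  let φ : ContDiffBump x := ⟨ε / 4, ε / 2, by positivity, by linarith⟩
  have hφU : tsupport φ ⊆ U := by
    rw [φ.tsupport_eq]
    exact (Metric.closedBall_subset_ball (half_lt_self hε)).trans hball
  refine ⟨fun y => φ y • f y, contDiff_iff_contDiffAt.2 fun y => ?_, ?_⟩
  · by_cases hy : y ∈ tsupport φ
    · exact (φ.contDiff.contDiffOn.smul hf).contDiffAt (hU.mem_nhds (hφU hy))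
    · refine (contDiffAt_const (c := (0 : F))).congr_of_eventuallyEq ?_
      filter_upwards [notMem_tsupport_iff_eventuallyEq.1 hy] with z hz
      rw [hz, Pi.zero_apply, zero_smul]
  · filter_upwards [Metric.ball_mem_nhds x (by positivity : 0 < ε / 4)] with y hy
    rw [φ.one_of_mem_closedBall (Metric.ball_subset_closedBall hy), one_smul]

theorem ExteriorAlgebra.algHom_sub_algebraMap_mem {R M A : Type*} [CommRing R] [AddCommGroup M]
    [Module R M] [Ring A] [Algebra R A] (φ : ExteriorAlgebra R M →ₐ[R] A) {J : TwoSidedIdeal A}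
    (hJ : ∀ m, φ (ExteriorAlgebra.ι R m) ∈ J) (b : ExteriorAlgebra R M) :
    φ b - algebraMap R A (ExteriorAlgebra.algebraMapInv b) ∈ J := by
  induction b using ExteriorAlgebra.induction with
  | algebraMap r => simp [J.zero_mem]
  | ι m => simpa [ExteriorAlgebra.algebraMapInv] using hJ m
  | mul a b ha hb =>
    have key : φ (a * b) - algebraMap R A (ExteriorAlgebra.algebraMapInv (a * b)) =
        (φ a - algebraMap R A (ExteriorAlgebra.algebraMapInv a)) * φ b +
          algebraMap R A (ExteriorAlgebra.algebraMapInv a) *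
            (φ b - algebraMap R A (ExteriorAlgebra.algebraMapInv b)) := by
      simp only [map_mul, sub_mul, mul_sub]
      abel
    rw [key]
    exact J.add_mem (J.mul_mem_right _ _ ha) (J.mul_mem_left _ _ hb)
  | add a b ha hb =>
    rw [map_add, map_add, map_add, add_sub_add_comm]
    exact J.add_mem ha hb

section SmoothGerms

variable (n q : ℕ) (x : Fin n → ℝ)

noncomputable def constGermHom : GrassmannAlg q →ₐ[ℝ] SmoothGermAtG n q x where
  toFun b := ⟨(↑(fun _ : Fin n → ℝ => b) : Filter.Germ (𝓝 x) (GrassmannAlg q)),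
    ⟨fun _ => b, ⟨Set.univ, isOpen_univ, trivial, ContDiffOnG.const _⟩, rfl⟩⟩
  map_one' := rfl
  map_mul' _ _ := rfl
  map_zero' := rfl
  map_add' _ _ := rfl
  commutes' r := Subtype.ext <| by
    show (↑(fun _ : Fin n → ℝ => algebraMap ℝ (GrassmannAlg q) r) : Filter.Germ (𝓝 x) _) =
      r • (1 : Filter.Germ (𝓝 x) (GrassmannAlg q))
    rw [← Filter.Germ.coe_one, ← Filter.Germ.coe_smul]
    exact congrArg _ (funext fun _ => Algebra.algebraMap_eq_smul_one r)

def contDiffSubalgebra (E : Type*) [NormedAddCommGroup E] [NormedSpace ℝ E] :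
    Subalgebra ℝ (E → ℝ) where
  carrier := {g | ContDiff ℝ (⊤ : ℕ∞) g}
  mul_mem' {f g} (hf : ContDiff ℝ (⊤ : ℕ∞) f) (hg : ContDiff ℝ (⊤ : ℕ∞) g) := hf.mul hg
  add_mem' {f g} (hf : ContDiff ℝ (⊤ : ℕ∞) f) (hg : ContDiff ℝ (⊤ : ℕ∞) g) := hf.add hg
  algebraMap_mem' r := (contDiff_const : ContDiff ℝ (⊤ : ℕ∞) fun _ : E => r)

theorem mem_contDiffSubalgebra {E : Type*} [NormedAddCommGroup E] [NormedSpace ℝ E]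
    {g : E → ℝ} :
    g ∈ contDiffSubalgebra E ↔ ContDiff ℝ (⊤ : ℕ∞) g :=
  Iff.rfl

noncomputable def scalarGermHom :
    contDiffSubalgebra (Fin n → ℝ) →ₐ[ℝ] SmoothGermAtG n q x where
  toFun g := ⟨(↑(fun y => algebraMap ℝ (GrassmannAlg q) (g.1 y)) : Filter.Germ (𝓝 x) _),
    ⟨_, ⟨Set.univ, isOpen_univ, trivial, 1, fun _ => g.1, fun _ => 1,
      fun _ => (mem_contDiffSubalgebra.1 g.2).contDiffOn,
      fun y _ => by simp [Algebra.algebraMap_eq_smul_one]⟩, rfl⟩⟩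
  map_one' := Subtype.ext <| congrArg Filter.Germ.ofFun
    (funext fun _ => map_one (algebraMap ℝ (GrassmannAlg q)))
  map_mul' _ _ := Subtype.ext <| congrArg Filter.Germ.ofFun
    (funext fun _ => map_mul (algebraMap ℝ (GrassmannAlg q)) _ _)
  map_zero' := Subtype.ext <| congrArg Filter.Germ.ofFun
    (funext fun _ => map_zero (algebraMap ℝ (GrassmannAlg q)))
  map_add' _ _ := Subtype.ext <| congrArg Filter.Germ.ofFun
    (funext fun _ => map_add (algebraMap ℝ (GrassmannAlg q)) _ _)
  commutes' r := Subtype.ext <| by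
    show (↑(fun _ : Fin n → ℝ => algebraMap ℝ (GrassmannAlg q) r) : Filter.Germ (𝓝 x) _) =
      r • (1 : Filter.Germ (𝓝 x) (GrassmannAlg q))
    rw [← Filter.Germ.coe_one, ← Filter.Germ.coe_smul]
    exact congrArg _ (funext fun _ => Algebra.algebraMap_eq_smul_one r)

noncomputable def augmentation : SmoothGermAtG n q x →ₐ[ℝ] ℝ :=
  { (ExteriorAlgebra.algebraMapInv : GrassmannAlg q →ₐ[ℝ] ℝ).toRingHom.comp
      (Filter.Germ.valueRingHom.comp (SmoothGermAtG n q x).val.toRingHom) with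
    commutes' := fun r => by
      show ExteriorAlgebra.algebraMapInv
        (Filter.Germ.valueₗ (𝕜 := ℝ) (r • (1 : Filter.Germ (𝓝 x) (GrassmannAlg q)))) = r
      rw [map_smul]
      show ExteriorAlgebra.algebraMapInv (r • (1 : GrassmannAlg q)) = r
      rw [← Algebra.algebraMap_eq_smul_one]
      exact ExteriorAlgebra.algebraMap_leftInverse _ r }

theorem mem_mGSub_iff {h : SmoothGermAtG n q x} : h ∈ mGSub n q x ↔ augmentation n q x h = 0 :=
  Iff.rfl

theorem augmentation_scalarGermHom (g : contDiffSubalgebra (Fin n → ℝ)) :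
    augmentation n q x (scalarGermHom n q x g) = (g : (Fin n → ℝ) → ℝ) x :=
  ExteriorAlgebra.algebraMap_leftInverse _ _

theorem augmentation_constGermHom (b : GrassmannAlg q) :
    augmentation n q x (constGermHom n q x b) = ExteriorAlgebra.algebraMapInv b :=
  rfl

theorem coe_scalarGermHom_mul_constGermHom (g : contDiffSubalgebra (Fin n → ℝ))
    (b : GrassmannAlg q) :
    ((scalarGermHom n q x g * constGermHom n q x b : SmoothGermAtG n q x) :
      Filter.Germ (𝓝 x) (GrassmannAlg q)) = ↑(fun y => (g : (Fin n → ℝ) → ℝ) y • b) :=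
  congrArg Filter.Germ.ofFun (funext fun _ => (Algebra.smul_def _ _).symm)

theorem exists_eq_sum_scalarGermHom_mul_constGermHom (h : SmoothGermAtG n q x) :
    ∃ (k : ℕ) (s : Fin k → contDiffSubalgebra (Fin n → ℝ)) (b : Fin k → GrassmannAlg q),
      h = ∑ j, scalarGermHom n q x (s j) * constGermHom n q x (b j) := by
  obtain ⟨f, ⟨U, hU, hxU, k, g, b, hg, hfg⟩, hf⟩ := h.2
  choose s hs hsg using fun j => (hg j).exists_contDiff_eventuallyEq hU hxU
  refine ⟨k, fun j => ⟨s j, hs j⟩, b, Subtype.ext ?_⟩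
  rw [AddSubmonoidClass.coe_finsetSum]
  simp only [coe_scalarGermHom_mul_constGermHom]
  rw [hf, ← Germ.coe_sum, Germ.coe_eq]
  filter_upwards [hU.mem_nhds hxU, eventually_all.2 hsg] with y hyU hys
  rw [hfg y hyU, Finset.sum_apply]
  exact Finset.sum_congr rfl fun j _ => by rw [hys j]

noncomputable def coordIdeal : TwoSidedIdeal (SmoothGermAtG n q x) :=
  TwoSidedIdeal.span (Set.range (evenCoordGermG n q x) ∪ Set.range (oddCoordGermG n q x))

theorem coordIdeal_le_ker_augmentation :
    coordIdeal n q x ≤ TwoSidedIdeal.ker (augmentation n q x) := by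
  refine TwoSidedIdeal.span_le.2 ?_
  rintro _ (⟨i, rfl⟩ | ⟨j, rfl⟩) <;> rw [SetLike.mem_coe, TwoSidedIdeal.mem_ker]
  · exact (ExteriorAlgebra.algebraMap_leftInverse _ _).trans (sub_self _)
  · show ExteriorAlgebra.algebraMapInv (ExteriorAlgebra.ι ℝ _) = 0
    simp [ExteriorAlgebra.algebraMapInv]

theorem constGermHom_sub_algebraMap_mem_coordIdeal (b : GrassmannAlg q) :
    constGermHom n q x b - algebraMap ℝ _ (ExteriorAlgebra.algebraMapInv b) ∈
      coordIdeal n q x := by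
  refine ExteriorAlgebra.algHom_sub_algebraMap_mem _ (fun v => ?_) b
  rw [← Finset.univ_sum_single v, map_sum, map_sum]
  refine TwoSidedIdeal.finsetSum_mem _ _ _ fun j _ => ?_
  rw [← mul_one (v j), ← smul_eq_mul, Pi.single_smul, map_smul, map_smul, Algebra.smul_def]
  exact TwoSidedIdeal.mul_mem_left _ _ _ (TwoSidedIdeal.subset_span (Or.inr ⟨j, rfl⟩))

theorem scalarGermHom_mem_coordIdeal {c : contDiffSubalgebra (Fin n → ℝ)}
    (hc : (c : (Fin n → ℝ) → ℝ) x = 0) : scalarGermHom n q x c ∈ coordIdeal n q x := by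
  obtain ⟨d, hd, hcd⟩ := (mem_contDiffSubalgebra.1 c.2).exists_eq_add_sum_sub_mul x
  have hcoord : ∀ i, ContDiff ℝ (⊤ : ℕ∞) fun y : Fin n → ℝ => y i - x i := fun i => by fun_prop
  have hc_eq : c = ∑ i, ⟨_, hcoord i⟩ * ⟨d i, hd i⟩ := by
    ext y
    simp [hcd y, hc]
  rw [hc_eq, map_sum]
  refine TwoSidedIdeal.finsetSum_mem _ _ _ fun i _ => ?_
  rw [map_mul]
  exact TwoSidedIdeal.mul_mem_right _ _ _ (TwoSidedIdeal.subset_span (Or.inl ⟨i, rfl⟩))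

theorem mem_coordIdeal_of_augmentation_eq_zero {h : SmoothGermAtG n q x}
    (hh : augmentation n q x h = 0) : h ∈ coordIdeal n q x := by
  obtain ⟨k, s, b, rfl⟩ := exists_eq_sum_scalarGermHom_mul_constGermHom n q x h
  set ε : Fin k → ℝ := fun j => ExteriorAlgebra.algebraMapInv (b j)
  have hsplit : ∑ j, scalarGermHom n q x (s j) * constGermHom n q x (b j) =
      scalarGermHom n q x (∑ j, ε j • s j) + ∑ j, scalarGermHom n q x (s j) *
        (constGermHom n q x (b j) - algebraMap ℝ _ (ε j)) := by
    simp only [map_sum, Algebra.smul_def, Algebra.commutes, map_mul, AlgHom.commutes, mul_sub,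
      Finset.sum_sub_distrib, add_sub_cancel]
  have hcx : ((∑ j, ε j • s j : contDiffSubalgebra (Fin n → ℝ)) : (Fin n → ℝ) → ℝ) x = 0 := by
    simpa [ε, augmentation_scalarGermHom, augmentation_constGermHom, mul_comm] using hh
  rw [hsplit]
  exact TwoSidedIdeal.add_mem _ (scalarGermHom_mem_coordIdeal n q x hcx)
    (TwoSidedIdeal.finsetSum_mem _ _ _ fun j _ => TwoSidedIdeal.mul_mem_left _ _ _
      (constGermHom_sub_algebraMap_mem_coordIdeal n q x (b j)))

end SmoothGerms

theorem mG_eq_twoSidedSpan_general (n q : ℕ) (x : Fin n → ℝ) :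
    (mGSub n q x : Set (SmoothGermAtG n q x)) =
      (TwoSidedIdeal.span
        (Set.range (evenCoordGermG n q x) ∪ Set.range (oddCoordGermG n q x)) :
          TwoSidedIdeal (SmoothGermAtG n q x)) := by
  ext h
  change h ∈ mGSub n q x ↔ h ∈ coordIdeal n q x
  rw [mem_mGSub_iff]
  exact ⟨mem_coordIdeal_of_augmentation_eq_zero n q x,
    fun hh => (TwoSidedIdeal.mem_ker _).1 (coordIdeal_le_ker_augmentation n q x hh)⟩

/-- **(Lemma 3.14 (i), specialized to `ℝ`.)** Let `U ⊆ ℝ^n` be open and `x ∈ U`. The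
two-sided ideal `m_x = {h ∈ A_x ∣ ε (h x) = 0}` of the algebra `A_x` of germs at `x` of
smooth `λ_q`-valued maps is generated, as a two-sided ideal, by the germs of the scalar
coordinate functions `y ↦ (y i - x i) · 1` together with the constant germs with value
`ι (e j)`. -/
theorem mG_eq_twoSidedSpan (n q : ℕ) (U : Set (Fin n → ℝ)) (hU : IsOpen U)
    (x : Fin n → ℝ) (hx : x ∈ U) :
    (mGSub n q x : Set (SmoothGermAtG n q x)) =
      (TwoSidedIdeal.span
        (Set.range (evenCoordGermG n q x) ∪ Set.range (oddCoordGermG n q x)) :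
          TwoSidedIdeal (SmoothGermAtG n q x)) :=
  mG_eq_twoSidedSpan_general n q x
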